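/- arXiv:2404.14491 — 4 statements merged into one kernel-verified Lean document; each statement's English description precedes it below -/
import Mathlib

section
/- For every integer d ≥ 1 and all density matrices σ and τ on ℂ^d, the trace distance between the maximally entangled state and the product state σ ⊗ τ satisfies ‖Ψ⁺ − σ ⊗ₖ τ‖₁ ≥ 2(1 − 1/√d), where Ψ⁺ is the maximally entangled state on ℂ^d ⊗ ℂ^d and ‖·‖₁ is the trace norm. -/
open Matrix Kronecker
open scoped ComplexOrder BigOperators

/-- The maximally entangled unit vector on `ℂ^d ⊗ ℂ^d`. -/
noncomputable def maxEntVec (d : ℕ) : Fin d × Fin d → ℂ :=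
  fun p => if p.1 = p.2 then ((1 / Real.sqrt d : ℝ) : ℂ) else 0

/-- The maximally entangled state `Ψ⁺ = |ψ⟩⟨ψ|` on `ℂ^d ⊗ ℂ^d`. -/
noncomputable def maxEntState (d : ℕ) :
    Matrix (Fin d × Fin d) (Fin d × Fin d) ℂ :=
  Matrix.of fun p q => maxEntVec d p * star (maxEntVec d q)

/-!
For Hermitian `A` and a unit vector `v`, write `v` in an eigenbasis of `A` with weights
`pᵢ ∈ [0, 1]`; then `2⟪v, A v⟫ - tr A = ∑ λᵢ (2pᵢ - 1) ≤ ∑ |λᵢ|`. Take `A = Ψ⁺ - σ ⊗ τ`, which has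
trace `0`, and `v = ψ`: then `⟪ψ, A ψ⟫ = 1 - tr (σ τᵀ) / d`, and `tr (σ τᵀ) ≤ tr σ · tr τ = 1`
because `σ` and `τᵀ` are positive semidefinite. Hence `‖A‖₁ ≥ 2 (1 - 1/d) ≥ 2 (1 - 1/√d)`.
-/

namespace Matrix.IsHermitian

variable {𝕜 n : Type*} [RCLike 𝕜] [Fintype n] [DecidableEq n] {A : Matrix n n 𝕜}

theorem star_vecMul_eigenvectorUnitary (hA : A.IsHermitian) (v : n → 𝕜) :
    star v ᵥ* (hA.eigenvectorUnitary : Matrix n n 𝕜) =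
      star (star (hA.eigenvectorUnitary : Matrix n n 𝕜) *ᵥ v) := by
  rw [star_mulVec, star_eq_conjTranspose, conjTranspose_conjTranspose]

theorem star_dotProduct_mulVec_eq_sum (hA : A.IsHermitian) (v : n → 𝕜) :
    star v ⬝ᵥ (A *ᵥ v) = ∑ i, (hA.eigenvalues i : 𝕜) *
      (‖(star (hA.eigenvectorUnitary : Matrix n n 𝕜) *ᵥ v) i‖ ^ 2 : ℝ) := by
  conv_lhs => rw [hA.spectral_theorem, Unitary.conjStarAlgAut_apply]
  rw [← mulVec_mulVec, ← mulVec_mulVec, dotProduct_mulVec, hA.star_vecMul_eigenvectorUnitary]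
  simp only [mulVec_diagonal, dotProduct, Pi.star_apply, RCLike.star_def, Function.comp_apply]
  refine Finset.sum_congr rfl fun i _ => ?_
  rw [mul_left_comm, RCLike.conj_mul, RCLike.ofReal_pow]

theorem sum_norm_sq_star_eigenvectorUnitary_mulVec (hA : A.IsHermitian) (v : n → 𝕜) :
    ∑ i, ‖(star (hA.eigenvectorUnitary : Matrix n n 𝕜) *ᵥ v) i‖ ^ 2 = RCLike.re (star v ⬝ᵥ v) := by
  have hnorm : star (star (hA.eigenvectorUnitary : Matrix n n 𝕜) *ᵥ v) ⬝ᵥ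
      (star (hA.eigenvectorUnitary : Matrix n n 𝕜) *ᵥ v) = star v ⬝ᵥ v := by
    rw [← hA.star_vecMul_eigenvectorUnitary, ← dotProduct_mulVec, mulVec_mulVec,
      mem_unitaryGroup_iff.mp hA.eigenvectorUnitary.2, one_mulVec]
  rw [← hnorm]
  simp only [dotProduct, Pi.star_apply, RCLike.star_def, RCLike.conj_mul, map_sum]
  norm_cast

theorem two_mul_re_dotProduct_mulVec_sub_re_trace_le (hA : A.IsHermitian) {v : n → 𝕜}
    (hv : star v ⬝ᵥ v = 1) :
    2 * RCLike.re (star v ⬝ᵥ (A *ᵥ v)) - RCLike.re A.trace ≤ ∑ i, |hA.eigenvalues i| := by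
  set p : n → ℝ := fun i ↦ ‖(star (hA.eigenvectorUnitary : Matrix n n 𝕜) *ᵥ v) i‖ ^ 2
  have hp_sum : ∑ i, p i = 1 := by
    simp only [p, hA.sum_norm_sq_star_eigenvectorUnitary_mulVec, hv, RCLike.one_re]
  have hp_le_one (i : n) : p i ≤ 1 :=
    hp_sum ▸ Finset.single_le_sum (fun j _ ↦ sq_nonneg ‖_‖) (Finset.mem_univ i)
  have hterm (i : n) : hA.eigenvalues i * (2 * p i - 1) ≤ |hA.eigenvalues i| := by
    have : 0 ≤ p i := sq_nonneg _
    cases abs_cases (hA.eigenvalues i) <;> nlinarith [hp_le_one i]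
  rw [hA.star_dotProduct_mulVec_eq_sum, hA.trace_eq_sum_eigenvalues]
  simp only [map_sum, RCLike.re_ofReal_mul, RCLike.ofReal_re, Finset.mul_sum,
    ← Finset.sum_sub_distrib]
  refine Finset.sum_le_sum fun i _ ↦ ?_
  linarith [hterm i]

end Matrix.IsHermitian

namespace Matrix.PosSemidef

variable {𝕜 n : Type*} [RCLike 𝕜]

theorem norm_apply_sq_le {M : Matrix n n 𝕜} (hM : M.PosSemidef) (i j : n) :
    ‖M i j‖ ^ 2 ≤ RCLike.re (M i i) * RCLike.re (M j j) := by
  have hdet := (hM.submatrix ![i, j]).det_nonneg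
  rw [det_fin_two] at hdet
  simp only [submatrix_apply, Matrix.cons_val_zero, Matrix.cons_val_one] at hdet
  rw [← hM.isHermitian.apply j i, RCLike.star_def, RCLike.mul_conj] at hdet
  have him (k : n) : RCLike.im (M k k) = 0 := (RCLike.nonneg_iff.mp hM.diag_nonneg).2
  have := (RCLike.nonneg_iff.mp hdet).1
  simp only [map_sub, RCLike.mul_re, him, mul_zero, sub_zero] at this
  norm_cast at this
  linarith

theorem norm_trace_mul_le [Fintype n] {A B : Matrix n n 𝕜} (hA : A.PosSemidef)
    (hB : B.PosSemidef) : ‖(A * B).trace‖ ≤ RCLike.re A.trace * RCLike.re B.trace := by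
  set a : n → ℝ := fun i ↦ RCLike.re (A i i)
  set b : n → ℝ := fun i ↦ RCLike.re (B i i)
  have ha (i : n) : 0 ≤ a i := (RCLike.nonneg_iff.mp hA.diag_nonneg).1
  have hb (i : n) : 0 ≤ b i := (RCLike.nonneg_iff.mp hB.diag_nonneg).1
  -- AM-GM, from `‖A i k‖ ‖B k i‖ ≤ √((a i * b k) * (a k * b i))`
  have hentry (i k : n) : ‖A i k‖ * ‖B k i‖ ≤ (a i * b k + a k * b i) / 2 := by
    have hsq : (‖A i k‖ * ‖B k i‖) ^ 2 ≤ (a i * b k) * (a k * b i) := by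
      have := mul_le_mul (hA.norm_apply_sq_le i k) (hB.norm_apply_sq_le k i)
        (sq_nonneg _) (mul_nonneg (ha i) (ha k))
      linarith
    nlinarith [sq_nonneg (a i * b k - a k * b i), mul_nonneg (ha i) (hb k),
      mul_nonneg (ha k) (hb i), mul_nonneg (norm_nonneg (A i k)) (norm_nonneg (B k i))]
  calc ‖(A * B).trace‖ = ‖∑ i, ∑ k, A i k * B k i‖ := by simp only [trace, diag, mul_apply]
    _ ≤ ∑ i, ∑ k, ‖A i k‖ * ‖B k i‖ := by
      refine (norm_sum_le _ _).trans (Finset.sum_le_sum fun i _ ↦ ?_)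
      exact (norm_sum_le _ _).trans_eq (by simp only [norm_mul])
    _ ≤ ∑ i, ∑ k, (a i * b k + a k * b i) / 2 :=
      Finset.sum_le_sum fun i _ ↦ Finset.sum_le_sum fun k _ ↦ hentry i k
    _ = (∑ i, a i) * ∑ i, b i := by
      simp only [add_div, Finset.sum_add_distrib, Finset.sum_mul_sum]
      rw [Finset.sum_comm (f := fun i k ↦ a k * b i / 2)]
      simp only [← Finset.sum_add_distrib, add_halves]
    _ = RCLike.re A.trace * RCLike.re B.trace := by simp only [trace, diag, map_sum, a, b]

end Matrix.PosSemidef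

theorem star_maxEntVec (d : ℕ) : star (maxEntVec d) = maxEntVec d := by
  ext p
  by_cases h : p.1 = p.2 <;> simp [maxEntVec, h]

theorem ofReal_one_div_sqrt_mul_self (d : ℕ) :
    ((1 / Real.sqrt d : ℝ) : ℂ) * ((1 / Real.sqrt d : ℝ) : ℂ) = (d : ℂ)⁻¹ := by
  rw [← Complex.ofReal_mul, div_mul_div_comm, one_mul, Real.mul_self_sqrt d.cast_nonneg]
  simp

theorem star_maxEntVec_dotProduct_kronecker_mulVec (d : ℕ) (A B : Matrix (Fin d) (Fin d) ℂ) :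
    star (maxEntVec d) ⬝ᵥ ((A ⊗ₖ B) *ᵥ maxEntVec d) = (d : ℂ)⁻¹ * (A * Bᵀ).trace := by
  rw [star_maxEntVec]
  simp only [dotProduct, mulVec, maxEntVec, Fintype.sum_prod_type, kroneckerMap_apply, ite_mul,
    zero_mul, mul_ite, mul_zero, Finset.sum_ite_eq, Finset.mem_univ, if_true,
    Finset.sum_ite_irrel, Finset.sum_const_zero, trace, diag, mul_apply, transpose_apply,
    Finset.mul_sum, ← ofReal_one_div_sqrt_mul_self]
  refine Finset.sum_congr rfl fun i _ ↦ Finset.sum_congr rfl fun k _ ↦ ?_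
  ring

theorem star_maxEntVec_dotProduct_self (d : ℕ) (hd : 1 ≤ d) :
    star (maxEntVec d) ⬝ᵥ maxEntVec d = 1 := by
  rw [star_maxEntVec]
  simp only [dotProduct, maxEntVec, Fintype.sum_prod_type, ite_mul, zero_mul, mul_ite, mul_zero,
    Finset.sum_ite_eq, Finset.mem_univ, if_true, ofReal_one_div_sqrt_mul_self, Finset.sum_const,
    Finset.card_univ, Fintype.card_fin, nsmul_eq_mul]
  exact mul_inv_cancel₀ (by exact_mod_cast Nat.one_le_iff_ne_zero.mp hd)

theorem re_star_maxEntVec_dotProduct_kronecker_mulVec_le (d : ℕ) {σ τ : Matrix (Fin d) (Fin d) ℂ}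
    (hσ : σ.PosSemidef) (hσtr : σ.trace = 1) (hτ : τ.PosSemidef) (hτtr : τ.trace = 1) :
    RCLike.re (star (maxEntVec d) ⬝ᵥ ((σ ⊗ₖ τ) *ᵥ maxEntVec d)) ≤ 1 / d := by
  have hprod := hσ.norm_trace_mul_le hτ.transpose
  rw [trace_transpose, hσtr, hτtr, RCLike.one_re, mul_one] at hprod
  rw [star_maxEntVec_dotProduct_kronecker_mulVec, ← Complex.ofReal_natCast, ← Complex.ofReal_inv,
    RCLike.re_to_complex, Complex.re_ofReal_mul, one_div]
  exact mul_le_of_le_one_right (by positivity) ((Complex.re_le_norm _).trans hprod)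

/-- For every `d ≥ 1` and density matrices `σ`, `τ` on `ℂ^d`, the trace distance between the
maximally entangled state and the product state `σ ⊗ₖ τ` is at least `2(1 - 1/√d)`. -/
theorem traceNorm_maxEnt_sub_product_ge (d : ℕ) (hd : 1 ≤ d)
    (σ τ : Matrix (Fin d) (Fin d) ℂ)
    (hσ : σ.PosSemidef) (hσtr : σ.trace = 1)
    (hτ : τ.PosSemidef) (hτtr : τ.trace = 1)
    (hH : (maxEntState d - σ ⊗ₖ τ).IsHermitian) :
    2 * (1 - 1 / Real.sqrt d) ≤ ∑ i, |hH.eigenvalues i| := by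
  set ψ := maxEntVec d
  have hψ : star ψ ⬝ᵥ ψ = 1 := star_maxEntVec_dotProduct_self d hd
  have hΨ : maxEntState d = vecMulVec ψ (star ψ) := rfl
  have hΨψ : star ψ ⬝ᵥ (maxEntState d *ᵥ ψ) = 1 := by
    rw [hΨ, vecMulVec_mulVec, hψ, MulOpposite.op_one, one_smul, hψ]
  have htrace : (maxEntState d - σ ⊗ₖ τ).trace = 0 := by
    rw [trace_sub, hΨ, trace_vecMulVec, dotProduct_comm, hψ, trace_kronecker, hσtr, hτtr, mul_one,
      sub_self]
  have hoverlap := re_star_maxEntVec_dotProduct_kronecker_mulVec_le d hσ hσtr hτ hτtr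
  have hsqrt : 1 / (d : ℝ) ≤ 1 / Real.sqrt d :=
    one_div_le_one_div_of_le (by positivity) (Real.sqrt_le_self_iff.mpr (.inr (mod_cast hd)))
  have hbound := hH.two_mul_re_dotProduct_mulVec_sub_re_trace_le hψ
  rw [sub_mulVec, dotProduct_sub, map_sub, hΨψ, htrace] at hbound
  simp only [map_zero, RCLike.one_re] at hbound
  linarith
end

section
/- Let N ≥ 1, let ε ≥ 0, let σ⁰ be a density matrix on ℂ^N, and for each z ∈ Fin N let σ_z be a density matrix on ℂ^N such that the trace norm satisfies ‖σ⁰ − σ_z‖₁ ≤ ε. Then the average diagonal overlap satisfies (1/N) · Σ_{z ∈ Fin N} Re((σ_z)_{z z}) ≤ 1/N + ε. -/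
open Matrix
open scoped ComplexOrder BigOperators

/-!
Diagonalizing `σ₀ - σ z = U diag(λ) Uᴴ`, its `(z, z)` entry is `∑ₖ λₖ |U z k|²`, and the entries
of a unitary matrix have modulus at most `1`; so `Re (σ z) z z ≤ Re σ₀ z z + ‖σ₀ - σ z‖₁`.
Summing over `z` and using `tr σ₀ = 1` gives `∑_z Re (σ z) z z ≤ 1 + N ε`.
-/

namespace Matrix.IsHermitian

variable {𝕜 n : Type*} [RCLike 𝕜] [Fintype n] [DecidableEq n] {A : Matrix n n 𝕜}

theorem re_apply_self_eq_sum (hA : A.IsHermitian) (i : n) :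
    RCLike.re (A i i) =
      ∑ k, hA.eigenvalues k * ‖(hA.eigenvectorUnitary : Matrix n n 𝕜) i k‖ ^ 2 := by
  conv_lhs => rw [hA.spectral_theorem, Unitary.conjStarAlgAut_apply]
  simp only [mul_apply, diagonal_apply, mul_ite, mul_zero, Finset.sum_ite_eq', Finset.mem_univ,
    if_true, star_apply, map_sum]
  refine Finset.sum_congr rfl fun k _ => ?_
  simp only [Function.comp_apply, mul_right_comm, RCLike.star_def, RCLike.mul_conj]
  norm_cast
  exact mul_comm _ _

theorem abs_re_apply_self_le_sum_abs_eigenvalues (hA : A.IsHermitian) (i : n) :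
    |RCLike.re (A i i)| ≤ ∑ k, |hA.eigenvalues k| := by
  rw [hA.re_apply_self_eq_sum]
  refine (Finset.abs_sum_le_sum_abs _ _).trans (Finset.sum_le_sum fun k _ => ?_)
  rw [abs_mul, abs_pow, abs_norm]
  refine mul_le_of_le_one_right (abs_nonneg _) ?_
  exact pow_le_one₀ (norm_nonneg _) (entry_norm_bound_of_unitary hA.eigenvectorUnitary.2 i k)

end Matrix.IsHermitian

theorem average_diagonal_overlap_le_general (N : ℕ) (hN : 1 ≤ N) (ε : ℝ)
    (σ₀ : Matrix (Fin N) (Fin N) ℂ) (hσ₀tr : σ₀.trace = 1)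
    (σ : Fin N → Matrix (Fin N) (Fin N) ℂ)
    (hH : ∀ z, (σ₀ - σ z).IsHermitian)
    (hclose : ∀ z, ∑ i, |(hH z).eigenvalues i| ≤ ε) :
    (1 / N : ℝ) * ∑ z, ((σ z) z z).re ≤ 1 / N + ε := by
  have hdiag : ∀ z, ((σ z) z z).re ≤ (σ₀ z z).re + ε := fun z => by
    have h := ((hH z).abs_re_apply_self_le_sum_abs_eigenvalues z).trans (hclose z)
    rw [Matrix.sub_apply, map_sub] at h
    change |(σ₀ z z).re - ((σ z) z z).re| ≤ ε at h
    linarith [abs_sub_le_iff.mp h]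
  have htr : ∑ z, (σ₀ z z).re = 1 := by
    simpa [trace, Complex.re_sum] using congrArg Complex.re hσ₀tr
  have hN₀ : (N : ℝ) ≠ 0 := by exact_mod_cast Nat.one_le_iff_ne_zero.mp hN
  calc (1 / N : ℝ) * ∑ z, ((σ z) z z).re ≤ (1 / N : ℝ) * ∑ z, ((σ₀ z z).re + ε) := by
        gcongr with z; exact hdiag z
    _ = 1 / N + ε := by
        rw [Finset.sum_add_distrib, htr, Finset.sum_const, Finset.card_univ, Fintype.card_fin,
          nsmul_eq_mul]
        field_simp

/-- If `σ⁰` is a density matrix on `ℂ^N` and each `σ z` is a density matrix with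
trace-norm distance `‖σ⁰ - σ z‖₁ ≤ ε`, then the average diagonal overlap satisfies
`(1/N) · Σ_z Re((σ z) z z) ≤ 1/N + ε`. -/
theorem average_diagonal_overlap_le (N : ℕ) (hN : 1 ≤ N) (ε : ℝ) (hε : 0 ≤ ε)
    (σ₀ : Matrix (Fin N) (Fin N) ℂ) (hσ₀ : σ₀.PosSemidef) (hσ₀tr : σ₀.trace = 1)
    (σ : Fin N → Matrix (Fin N) (Fin N) ℂ)
    (hσ : ∀ z, (σ z).PosSemidef) (hσtr : ∀ z, (σ z).trace = 1)
    (hH : ∀ z, (σ₀ - σ z).IsHermitian)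
    (hclose : ∀ z, ∑ i, |(hH z).eigenvalues i| ≤ ε) :
    (1 / N : ℝ) * ∑ z, ((σ z) z z).re ≤ 1 / N + ε :=
  average_diagonal_overlap_le_general N hN ε σ₀ hσ₀tr σ hH hclose
end

section
/- For every natural number m ≥ 1, writing t = ⌊0.495·m⌋, the following inequality holds: 2 · C(m, t+1) · (e · 0.09)^{t+1} ≤ 2 · 2^{−0.005·m}, where C(m, t+1) = Nat.choose m (t+1) is the binomial coefficient and e = Real.exp 1. -/
lemma my_choose_le_two_pow (m k : ℕ) : m.choose k ≤ 2 ^ m := by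
  rcases le_or_gt k m with h | h
  · calc m.choose k ≤ ∑ i ∈ Finset.range (m + 1), m.choose i :=
        Finset.single_le_sum (fun _ _ => Nat.zero_le _)
          (Finset.mem_range.mpr (Nat.lt_succ_of_le h))
      _ = 2 ^ m := Nat.sum_range_choose m
  · simp [Nat.choose_eq_zero_of_lt h]

lemma my_base_ineq : (2 : ℝ) * (0.2447 : ℝ) ^ ((0.495 : ℝ)) ≤ (2 : ℝ) ^ ((-0.005 : ℝ)) := by
  have hrpos : (0 : ℝ) ≤ (2 : ℝ) ^ ((-0.005 : ℝ)) := (Real.rpow_pos_of_pos (by norm_num) _).le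
  refine le_of_pow_le_pow_left₀ (n := 200) (by norm_num) hrpos ?_
  have h1 : ((0.2447 : ℝ) ^ ((0.495 : ℝ))) ^ (200 : ℕ) = (0.2447 : ℝ) ^ (99 : ℕ) := by
    rw [← Real.rpow_natCast ((0.2447 : ℝ) ^ ((0.495 : ℝ))) 200,
      ← Real.rpow_mul (by norm_num : (0 : ℝ) ≤ 0.2447)]
    norm_num
  have h2 : ((2 : ℝ) ^ ((-0.005 : ℝ))) ^ (200 : ℕ) = 1 / 2 := by
    rw [← Real.rpow_natCast ((2 : ℝ) ^ ((-0.005 : ℝ))) 200,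
      ← Real.rpow_mul (by norm_num : (0 : ℝ) ≤ 2)]
    norm_num
  rw [mul_pow, h1, h2]
  norm_num

/-- Error-suppression estimate for the amplification theorem: for `m ≥ 1` and
`t = ⌊0.495 m⌋`, we have `2 · C(m, t+1) · (e · 0.09)^(t+1) ≤ 2 · 2^(-0.005 m)`. -/
theorem error_suppression (m : ℕ) (hm : 1 ≤ m) :
    2 * (m.choose (⌊(0.495 : ℝ) * m⌋₊ + 1) : ℝ) *
        (Real.exp 1 * 0.09) ^ (⌊(0.495 : ℝ) * m⌋₊ + 1)
      ≤ 2 * (2 : ℝ) ^ (-(0.005 : ℝ) * m) := by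
  set k : ℕ := ⌊(0.495 : ℝ) * m⌋₊ + 1 with hk
  have hka : (0.495 : ℝ) * m ≤ (k : ℝ) := by
    push_cast [hk]
    exact (Nat.lt_floor_add_one _).le
  have ha : Real.exp 1 * 0.09 ≤ 0.2447 := by
    have := Real.exp_one_lt_d9
    nlinarith
  have ha0 : (0 : ℝ) ≤ Real.exp 1 * 0.09 := by positivity
  have hC : (m.choose k : ℝ) ≤ 2 ^ m := by
    exact_mod_cast my_choose_le_two_pow m k
  have step1 : 2 * (m.choose k : ℝ) * (Real.exp 1 * 0.09) ^ k
      ≤ 2 * (2 : ℝ) ^ m * (0.2447 : ℝ) ^ k := by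
    apply mul_le_mul
    · nlinarith
    · exact pow_le_pow_left₀ ha0 ha k
    · positivity
    · positivity
  have step2 : (0.2447 : ℝ) ^ k ≤ (0.2447 : ℝ) ^ ((0.495 : ℝ) * m) := by
    rw [← Real.rpow_natCast (0.2447 : ℝ) k]
    exact Real.rpow_le_rpow_of_exponent_ge (by norm_num) (by norm_num) hka
  have step3 : 2 * (2 : ℝ) ^ m * ((0.2447 : ℝ) ^ ((0.495 : ℝ) * m))
      ≤ 2 * (2 : ℝ) ^ (-(0.005 : ℝ) * m) := by
    have e1 : (2 : ℝ) ^ m * (0.2447 : ℝ) ^ ((0.495 : ℝ) * m)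
        = ((2 : ℝ) * (0.2447 : ℝ) ^ ((0.495 : ℝ))) ^ (m : ℕ) := by
      rw [Real.rpow_mul (by norm_num : (0:ℝ) ≤ 0.2447), Real.rpow_natCast, mul_pow]
    have e2 : (2 : ℝ) ^ (-(0.005 : ℝ) * m) = ((2 : ℝ) ^ ((-0.005 : ℝ))) ^ (m : ℕ) := by
      rw [Real.rpow_mul (by norm_num : (0:ℝ) ≤ 2), Real.rpow_natCast]
    rw [mul_assoc, e1, e2]
    have := pow_le_pow_left₀ (by positivity) my_base_ineq m
    nlinarith [pow_nonneg (show (0:ℝ) ≤ 2 * (0.2447:ℝ) ^ ((0.495:ℝ)) by positivity) m]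
  calc 2 * (m.choose k : ℝ) * (Real.exp 1 * 0.09) ^ k
      ≤ 2 * (2 : ℝ) ^ m * (0.2447 : ℝ) ^ k := step1
    _ ≤ 2 * (2 : ℝ) ^ m * ((0.2447 : ℝ) ^ ((0.495 : ℝ) * m)) := by
        apply mul_le_mul_of_nonneg_left step2 (by positivity)
    _ ≤ 2 * (2 : ℝ) ^ (-(0.005 : ℝ) * m) := step3
end

section
/- Let N ≥ 1 and k ≥ 1, let ρ_z be a density matrix on ℂ^k for each z ∈ Fin N, and let g : Fin N → Fin N be a function. Define X = (1/N)·Σ_z ρ_z ⊗ₖ E_{g(z)} and Y = (1/N)·Σ_z ρ_z ⊗ₖ E_z, where E_w = Matrix.stdBasisMatrix w w 1. Then the trace distance satisfies ‖X − Y‖₁ ≤ 2·√(1 − p), where p = |{z ∈ Fin N : g(z) = z}| / N is the fraction of fixed points of g. -/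
open Matrix Kronecker
open scoped ComplexOrder BigOperators

/-!
The terms with `g z = z` cancel, so `X - Y = P - Q` where `P` and `Q` are the (scaled)
classical-quantum states `∑ ρ z ⊗ₖ |g z⟩⟨g z|` and `∑ ρ z ⊗ₖ |z⟩⟨z|` restricted to the
wrongly guessed `z`. Both are positive semidefinite of trace `1 - p`, and the trace norm of a
difference of positive semidefinite matrices is at most the sum of their traces. Hence
`‖X - Y‖₁ ≤ 2 (1 - p) ≤ 2 √(1 - p)`.
-/

namespace Matrix

variable {𝕜 m n ι : Type*} [RCLike 𝕜]

section

variable [Fintype n] [Fintype ι]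

lemma trace_eq_sum_star_dotProduct_mulVec (A : Matrix n n 𝕜)
    (b : OrthonormalBasis ι 𝕜 (EuclideanSpace 𝕜 n)) :
    A.trace = ∑ i, star ⇑(b i) ⬝ᵥ A *ᵥ ⇑(b i) := by
  classical
  rw [← trace_toLin_eq A (EuclideanSpace.basisFun n 𝕜).toBasis,
    LinearMap.trace_eq_sum_inner _ b]
  refine Fintype.sum_congr _ _ fun i => ?_
  rw [EuclideanSpace.inner_eq_star_dotProduct, dotProduct_comm]
  rfl

/-- Each eigenvalue of `P - Q` is `⟪u, P u⟫ - ⟪u, Q u⟫` for a unit eigenvector `u`, so its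
absolute value is at most `⟪u, P u⟫ + ⟪u, Q u⟫`; summing over an eigenbasis gives the traces. -/
theorem IsHermitian.sum_abs_eigenvalues_le_of_eq_sub [DecidableEq n] {A P Q : Matrix n n 𝕜}
    (hA : A.IsHermitian) (hP : P.PosSemidef) (hQ : Q.PosSemidef) (hAPQ : A = P - Q) :
    ∑ i, |hA.eigenvalues i| ≤ RCLike.re P.trace + RCLike.re Q.trace := by
  let u := hA.eigenvectorBasis
  have h_eig : ∀ i, hA.eigenvalues i = RCLike.re (star ⇑(u i) ⬝ᵥ P *ᵥ ⇑(u i))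
      - RCLike.re (star ⇑(u i) ⬝ᵥ Q *ᵥ ⇑(u i)) := fun i => by
    rw [hA.eigenvalues_eq, ← map_sub, ← dotProduct_sub, ← sub_mulVec, ← hAPQ]
  rw [trace_eq_sum_star_dotProduct_mulVec P u, trace_eq_sum_star_dotProduct_mulVec Q u,
    map_sum, map_sum, ← Finset.sum_add_distrib]
  refine Finset.sum_le_sum fun i _ => ?_
  rw [h_eig]
  refine (abs_sub _ _).trans_eq ?_
  rw [abs_of_nonneg (hP.re_dotProduct_nonneg _), abs_of_nonneg (hQ.re_dotProduct_nonneg _)]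

end

lemma posSemidef_single_self [DecidableEq n] (i : n) {r : 𝕜} (hr : 0 ≤ r) :
    (single i i r).PosSemidef := by
  rw [← diagonal_single]
  refine PosSemidef.diagonal fun j => ?_
  rcases eq_or_ne j i with rfl | hj
  · simpa using hr
  · simp [hj]

variable [Fintype m] [Fintype n] [DecidableEq n]
  (ρ : ι → Matrix m m 𝕜) (s : Finset ι) (f : ι → n)

lemma posSemidef_sum_kronecker_single (hρ : ∀ z, (ρ z).PosSemidef) :
    (∑ z ∈ s, ρ z ⊗ₖ single (f z) (f z) (1 : 𝕜)).PosSemidef :=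
  posSemidef_sum s fun z _ => (hρ z).kronecker (posSemidef_single_self _ zero_le_one)

lemma trace_sum_kronecker_single (hρ : ∀ z, (ρ z).trace = 1) :
    (∑ z ∈ s, ρ z ⊗ₖ single (f z) (f z) (1 : 𝕜)).trace = s.card := by
  simp [trace_sum, trace_kronecker, hρ]

theorem IsHermitian.sum_abs_eigenvalues_le_of_eq_smul_sum_kronecker_single_sub [Fintype ι]
    [DecidableEq m]
    (hρ : ∀ z, (ρ z).PosSemidef) (hρtr : ∀ z, (ρ z).trace = 1) (h : ι → n)
    {c : ℝ} (hc : 0 ≤ c) {A : Matrix (m × n) (m × n) 𝕜} (hA : A.IsHermitian)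
    (hA_eq : A = (c : 𝕜) • ∑ z, ρ z ⊗ₖ single (f z) (f z) (1 : 𝕜)
      - (c : 𝕜) • ∑ z, ρ z ⊗ₖ single (h z) (h z) (1 : 𝕜)) :
    ∑ i, |hA.eigenvalues i| ≤ 2 * c * (Finset.univ.filter fun z => f z ≠ h z).card := by
  set F := Finset.univ.filter fun z => f z ≠ h z
  have hA_eq_F : A = (c : 𝕜) • ∑ z ∈ F, ρ z ⊗ₖ single (f z) (f z) (1 : 𝕜)
      - (c : 𝕜) • ∑ z ∈ F, ρ z ⊗ₖ single (h z) (h z) (1 : 𝕜) := by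
    rw [hA_eq, ← smul_sub, ← smul_sub, ← Finset.sum_sub_distrib, ← Finset.sum_sub_distrib]
    congr 1
    refine (Finset.sum_filter_of_ne fun z _ hz => ?_).symm
    rintro hfz
    rw [hfz, sub_self] at hz
    exact hz rfl
  have hc' : (0 : 𝕜) ≤ c := RCLike.ofReal_nonneg.mpr hc
  have htrace (e : ι → n) :
      RCLike.re ((c : 𝕜) • ∑ z ∈ F, ρ z ⊗ₖ single (e z) (e z) (1 : 𝕜)).trace = c * F.card := by
    simp [trace_smul, trace_sum_kronecker_single ρ F e hρtr, RCLike.smul_re]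
  have := hA.sum_abs_eigenvalues_le_of_eq_sub
    ((posSemidef_sum_kronecker_single ρ F f hρ).smul hc')
    ((posSemidef_sum_kronecker_single ρ F h hρ).smul hc') hA_eq_F
  rw [htrace f, htrace h] at this
  linarith

end Matrix

theorem traceNorm_guess_sub_ideal_le_general (N k : ℕ)
    (ρ : Fin N → Matrix (Fin k) (Fin k) ℂ)
    (hρ : ∀ z, (ρ z).PosSemidef) (hρtr : ∀ z, (ρ z).trace = 1)
    (g : Fin N → Fin N)
    (X Y : Matrix (Fin k × Fin N) (Fin k × Fin N) ℂ)
    (hX : X = ((1 / N : ℝ) : ℂ) •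
      ∑ z, (ρ z) ⊗ₖ (Matrix.single (g z) (g z) (1 : ℂ)))
    (hY : Y = ((1 / N : ℝ) : ℂ) •
      ∑ z, (ρ z) ⊗ₖ (Matrix.single z z (1 : ℂ)))
    (hH : (X - Y).IsHermitian)
    (p : ℝ) (hp : p = ((Finset.univ.filter fun z : Fin N => g z = z).card : ℝ) / N) :
    ∑ i, |hH.eigenvalues i| ≤ 2 * Real.sqrt (1 - p) := by
  have hbound := hH.sum_abs_eigenvalues_le_of_eq_smul_sum_kronecker_single_sub ρ g hρ hρtr
    (fun z => z) (by positivity : (0 : ℝ) ≤ 1 / N) (by rw [hX, hY]; rfl)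
  set F := Finset.univ.filter fun z : Fin N => g z ≠ z
  have hcard : ((Finset.univ.filter fun z : Fin N => g z = z).card : ℝ) + F.card = N := by
    exact_mod_cast (Finset.card_filter_add_card_filter_not _).trans (Finset.card_fin N)
  have hF_add_p : F.card / N + p = (N : ℝ) / N := by
    rw [hp, ← add_div, add_comm, hcard]
  have hp_nonneg : 0 ≤ p := hp ▸ by positivity
  have hF_le : F.card / N ≤ 1 - p := by linarith [div_self_le_one (N : ℝ)]
  calc ∑ i, |hH.eigenvalues i| ≤ 2 * (F.card / N) := by
        convert hbound using 1
        ring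
    _ ≤ 2 * Real.sqrt (F.card / N) := by
        gcongr
        exact Real.le_sqrt_self_iff.mpr (by linarith)
    _ ≤ 2 * Real.sqrt (1 - p) := by gcongr

/-- Zero-knowledge simulation bound: for density matrices `ρ z` on `ℂ^k` and a guessing
function `g : Fin N → Fin N`, the trace distance between
`X = (1/N)·Σ_z ρ z ⊗ₖ |g z⟩⟨g z|` and `Y = (1/N)·Σ_z ρ z ⊗ₖ |z⟩⟨z|` is at most
`2√(1 - p)`, where `p` is the fraction of fixed points of `g`. -/
theorem traceNorm_guess_sub_ideal_le (N k : ℕ) (hN : 1 ≤ N) (hk : 1 ≤ k)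
    (ρ : Fin N → Matrix (Fin k) (Fin k) ℂ)
    (hρ : ∀ z, (ρ z).PosSemidef) (hρtr : ∀ z, (ρ z).trace = 1)
    (g : Fin N → Fin N)
    (X Y : Matrix (Fin k × Fin N) (Fin k × Fin N) ℂ)
    (hX : X = ((1 / N : ℝ) : ℂ) •
      ∑ z, (ρ z) ⊗ₖ (Matrix.single (g z) (g z) (1 : ℂ)))
    (hY : Y = ((1 / N : ℝ) : ℂ) •
      ∑ z, (ρ z) ⊗ₖ (Matrix.single z z (1 : ℂ)))
    (hH : (X - Y).IsHermitian)
    (p : ℝ) (hp : p = ((Finset.univ.filter fun z : Fin N => g z = z).card : ℝ) / N) :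
    ∑ i, |hH.eigenvalues i| ≤ 2 * Real.sqrt (1 - p) :=
  traceNorm_guess_sub_ideal_le_general N k ρ hρ hρtr g X Y hX hY hH p hp
end
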